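/- arXiv:1908.00092 — 5 statements merged into one kernel-verified Lean document; each statement's English description precedes it below -/
import Mathlib

section
/- Let r ≥ 2 and let F be an r-graph. There exists a constant C > 0 (depending only on F and r) such that for every positive integer n and every Berge-F-free hypergraph H on n vertices in which every hyperedge has size at least |V(F)|, we have ∑_{h ∈ E(H)} |h|^r ≤ C · n^r. -/
open Finset

/-- `H` contains (a subhypergraph which is) a Berge copy of `F`. -/
def ContainsBerge {α β : Type*} [DecidableEq α] [DecidableEq β]
    (F : Finset (Finset α)) (H : Finset (Finset β)) : Prop :=
  ∃ (φ : α → β) (f : Finset α → Finset β),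
    Function.Injective φ ∧ Set.InjOn f (F : Set (Finset α)) ∧
    (∀ e ∈ F, f e ∈ H) ∧ (∀ e ∈ F, e.image φ ⊆ f e)

/-- `G` contains a subhypergraph isomorphic to `F`. -/
def CopyIn {α β : Type*} [DecidableEq α] [DecidableEq β]
    (F : Finset (Finset α)) (G : Finset (Finset β)) : Prop :=
  ∃ φ : α → β, Function.Injective φ ∧ ∀ e ∈ F, e.image φ ∈ G

noncomputable def exBerge {α : Type*} [DecidableEq α] (r n : ℕ) (F : Finset (Finset α)) : ℕ :=
  sSup {m | ∃ H : Finset (Finset (Fin n)),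
    (∀ e ∈ H, e.card = r) ∧ ¬ ContainsBerge F H ∧ H.card = m}

noncomputable def exForb {α : Type*} [DecidableEq α] (r n : ℕ) (F : Finset (Finset α)) : ℕ :=
  sSup {m | ∃ H : Finset (Finset (Fin n)),
    (∀ e ∈ H, e.card = r) ∧ ¬ CopyIn F H ∧ H.card = m}

/-- number of `r`-sets of vertices all of whose `k`-subsets are edges of `G`,
i.e. the number of copies of the complete `k`-graph on `r` vertices in `G`. -/
def cliqueCount (k r : ℕ) {n : ℕ} (G : Finset (Finset (Fin n))) : ℕ :=
  (((Finset.univ : Finset (Fin n)).powersetCard r).filter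
    (fun S => ∀ e ∈ S.powersetCard k, e ∈ G)).card

noncomputable def exGenClique {α : Type*} [DecidableEq α] (k r n : ℕ)
    (F : Finset (Finset α)) : ℕ :=
  sSup {m | ∃ G : Finset (Finset (Fin n)),
    (∀ e ∈ G, e.card = k) ∧ ¬ CopyIn F G ∧ cliqueCount k r G = m}

/-- `k ≥ R^(r)(F,F)`: every 2-coloring of the `r`-subsets of a `k`-set has a
monochromatic copy of `F`. -/
def RamseyProp {α : Type*} [DecidableEq α] (k r : ℕ) (F : Finset (Finset α)) : Prop :=
  ∀ χ : Finset (Fin k) → Bool, ∃ c : Bool,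
    CopyIn F (((Finset.univ : Finset (Fin k)).powersetCard r).filter (fun e => χ e = c))

def rShadow {β : Type*} [DecidableEq β] (r : ℕ) (H : Finset (Finset β)) : Finset (Finset β) :=
  H.biUnion (fun h => h.powersetCard r)

/-- the `k`-uniform expansion of a graph: add `k-2` new distinct vertices to each edge. -/
def expansion {α : Type*} [DecidableEq α] (k : ℕ) (F0 : Finset (Finset α)) :
    Finset (Finset (α ⊕ Finset α × Fin (k - 2))) :=
  F0.image (fun e =>
    e.image Sum.inl ∪ (Finset.univ : Finset (Fin (k - 2))).image (fun i => Sum.inr (e, i)))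

/-- Turán hypergraph `T^r(n,q)`: partition `Fin n` into `q` parts (residues mod `q`),
edges are the `r`-sets meeting every part at most once. -/
def turanEdges (r n q : ℕ) : Finset (Finset (Fin n)) :=
  ((Finset.univ : Finset (Fin n)).powersetCard r).filter
    (fun S => ∀ u ∈ S, ∀ v ∈ S, (u : ℕ) % q = (v : ℕ) % q → u = v)

def Colorable2 {α : Type*} (F0 : Finset (Finset α)) (t : ℕ) : Prop :=
  ∃ c : α → Fin t, ∀ e ∈ F0, ∀ u ∈ e, ∀ v ∈ e, u ≠ v → c u ≠ c v

/-- number of subhypergraphs of `G` isomorphic to `F`. -/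
def copyCount {α β : Type*} [Fintype α] [DecidableEq α] [Fintype β] [DecidableEq β]
    (F : Finset (Finset α)) (G : Finset (Finset β)) : ℕ :=
  (G.powerset.filter (fun G' => ∃ φ : α → β, Function.Injective φ ∧
      G' = F.image (fun e => e.image φ))).card

/-!
Call an `r`-set of vertices light if fewer than `|F|` hyperedges of `H` contain it. If some
`|V(F)|`-set `T` had no light `r`-subset, then after placing `V(F)` on `T` Hall's theorem would
assign each edge of `F` its own hyperedge containing it, a Berge copy of `F`. So every
`|V(F)|`-subset of every hyperedge `h` contains a light `r`-set, and double counting gives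
`C(|h|, r) ≤ C(|V(F)|, r) · #{light r-subsets of h}`. Summing over `h` and counting the pairs
(light `S`, `h ⊇ S`) the other way bounds `∑ C(|h|, r)` by `C(|V(F)|, r) · |F| · C(n, r)`, and
`|h|^r ≤ r^r · r! · C(|h|, r)` since `|h| ≥ r`.
-/

lemma exists_injOn_mem_of_card_le {ι δ : Type*} [DecidableEq δ] [Nonempty δ]
    (s : Finset ι) (t : ι → Finset δ) (ht : ∀ i ∈ s, #s ≤ #(t i)) :
    ∃ g : ι → δ, Set.InjOn g s ∧ ∀ i ∈ s, g i ∈ t i := by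
  classical
  have hall : ∀ u : Finset s, #u ≤ #(u.biUnion fun i => t i) := by
    intro u
    rcases u.eq_empty_or_nonempty with rfl | ⟨i, hi⟩
    · simp
    calc #u ≤ #s := by simpa using card_le_univ u
      _ ≤ #(t i) := ht i i.2
      _ ≤ #(u.biUnion fun i => t i) := card_le_card (subset_biUnion_of_mem (fun i : s => t i) hi)
  obtain ⟨f, hf, hft⟩ := (all_card_le_biUnion_card_iff_exists_injective _).1 hall
  refine ⟨fun i => if hi : i ∈ s then f ⟨i, hi⟩ else Classical.arbitrary δ, ?_, ?_⟩
  · intro i hi j hj hij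
    simp only [mem_coe] at hi hj
    exact congrArg Subtype.val (hf (by simpa [hi, hj] using hij))
  · intro i hi
    simpa [hi] using hft ⟨i, hi⟩

lemma pow_le_pow_mul_descFactorial {v r : ℕ} (hrv : r ≤ v) :
    v ^ r ≤ r ^ r * v.descFactorial r := by
  rcases r.eq_zero_or_pos with rfl | hr
  · simp
  have hv : v ≤ r * (v + 1 - r) := by
    obtain ⟨w, rfl⟩ := Nat.exists_eq_add_of_le hrv
    rw [show r + w + 1 - r = w + 1 by omega]
    nlinarith
  calc v ^ r ≤ (r * (v + 1 - r)) ^ r := Nat.pow_le_pow_left hv r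
    _ = r ^ r * (v + 1 - r) ^ r := mul_pow _ _ _
    _ ≤ r ^ r * v.descFactorial r := Nat.mul_le_mul_left _ (Nat.pow_sub_le_descFactorial v r)

section Berge

variable {α β : Type*} [DecidableEq α] [DecidableEq β]

def codegree (H : Finset (Finset β)) (S : Finset β) : ℕ := #{h ∈ H | S ⊆ h}

lemma choose_card_le_choose_mul_card_filter_subset {B : Finset (Finset β)} {s : Finset β}
    {r k : ℕ} (hrk : r ≤ k) (hks : k ≤ #s) (hB : ∀ S ∈ B, #S = r)
    (hcover : ∀ T ∈ s.powersetCard k, ∃ S ∈ B, S ⊆ T) :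
    (#s).choose r ≤ k.choose r * #{S ∈ B | S ⊆ s} := by
  set B' := {S ∈ B | S ⊆ s}
  have hcount : (#s).choose k ≤ #B' * (#s - r).choose (k - r) :=
    calc (#s).choose k = #(s.powersetCard k) := (card_powersetCard _ _).symm
      _ ≤ #(B'.biUnion fun S => {T ∈ s.powersetCard k | S ⊆ T}) := by
          refine card_le_card fun T hT => ?_
          obtain ⟨S, hS, hST⟩ := hcover T hT
          exact mem_biUnion.2 ⟨S, mem_filter.2 ⟨hS, hST.trans (mem_powersetCard.1 hT).1⟩,
            mem_filter.2 ⟨hT, hST⟩⟩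
      _ ≤ ∑ S ∈ B', #{T ∈ s.powersetCard k | S ⊆ T} := card_biUnion_le
      _ = ∑ _S ∈ B', (#s - r).choose (k - r) := by
          refine sum_congr rfl fun S hS => ?_
          obtain ⟨hSB, hSs⟩ := mem_filter.1 hS
          rw [card_filter_powersetCard_subset S s k hSs (hB S hSB ▸ hrk), hB S hSB]
      _ = #B' * (#s - r).choose (k - r) := by rw [sum_const, smul_eq_mul]
  refine Nat.le_of_mul_le_mul_right ?_ (Nat.choose_pos (Nat.sub_le_sub_right hks r))
  calc (#s).choose r * (#s - r).choose (k - r) = (#s).choose k * k.choose r :=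
        (Nat.choose_mul hrk).symm
    _ ≤ #B' * (#s - r).choose (k - r) * k.choose r := Nat.mul_le_mul_right _ hcount
    _ = k.choose r * #B' * (#s - r).choose (k - r) := by ring

variable {F : Finset (Finset α)} {H : Finset (Finset β)}

lemma containsBerge_of_card_le_codegree {φ : α → β} (hφ : φ.Injective)
    (hF : ∀ e ∈ F, #F ≤ codegree H (e.image φ)) : ContainsBerge F H := by
  obtain ⟨f, hf, hfH⟩ := exists_injOn_mem_of_card_le F (fun e => {h ∈ H | e.image φ ⊆ h}) hF
  exact ⟨φ, f, hφ, hf, fun e he => (mem_filter.1 (hfH e he)).1,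
    fun e he => (mem_filter.1 (hfH e he)).2⟩

variable [Fintype α] {r : ℕ}

lemma exists_codegree_lt_of_not_containsBerge (hF : ∀ e ∈ F, #e = r)
    (hB : ¬ ContainsBerge F H) {T : Finset β} (hT : Fintype.card α ≤ #T) :
    ∃ S ⊆ T, #S = r ∧ codegree H S < #F := by
  obtain ⟨φ, hφT⟩ := Function.Embedding.exists_of_card_le_finset hT
  by_contra! hheavy
  refine hB (containsBerge_of_card_le_codegree φ.injective fun e he => hheavy _ ?_ ?_)
  · intro x hx
    obtain ⟨a, -, rfl⟩ := mem_image.1 hx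
    exact hφT ⟨a, rfl⟩
  · rw [card_image_of_injective _ φ.injective, hF e he]

lemma le_card_of_not_containsBerge (hF : ∀ e ∈ F, #e = r) (hB : ¬ ContainsBerge F H)
    {T : Finset β} (hT : Fintype.card α ≤ #T) : r ≤ Fintype.card α := by
  obtain ⟨T', -, hT'⟩ := exists_subset_card_eq hT
  obtain ⟨S, hST', rfl, -⟩ := exists_codegree_lt_of_not_containsBerge hF hB hT'.ge
  exact hT' ▸ card_le_card hST'

variable [Fintype β]

lemma sum_choose_card_le_of_not_containsBerge (hF : ∀ e ∈ F, #e = r)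
    (hB : ¬ ContainsBerge F H) (hH : ∀ h ∈ H, Fintype.card α ≤ #h) :
    ∑ h ∈ H, (#h).choose r ≤ (Fintype.card α).choose r * (#F * (Fintype.card β).choose r) := by
  set k := Fintype.card α
  set light := {S ∈ (univ : Finset β).powersetCard r | codegree H S < #F}
  have hlight : ∀ h ∈ H, (#h).choose r ≤ k.choose r * #{S ∈ light | S ⊆ h} := by
    intro h hh
    refine choose_card_le_choose_mul_card_filter_subset
      (le_card_of_not_containsBerge hF hB (hH h hh)) (hH h hh)
      (fun S hS => (mem_powersetCard.1 (mem_filter.1 hS).1).2) fun T hT => ?_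
    obtain ⟨S, hST, hSr, hS⟩ :=
      exists_codegree_lt_of_not_containsBerge hF hB (mem_powersetCard.1 hT).2.ge
    exact ⟨S, mem_filter.2 ⟨mem_powersetCard.2 ⟨subset_univ S, hSr⟩, hS⟩, hST⟩
  calc ∑ h ∈ H, (#h).choose r ≤ ∑ h ∈ H, k.choose r * #{S ∈ light | S ⊆ h} := sum_le_sum hlight
    _ = k.choose r * ∑ S ∈ light, codegree H S := by
        rw [← mul_sum]
        congr 1
        exact sum_card_bipartiteAbove_eq_sum_card_bipartiteBelow (s := H) (t := light)
          (fun h S => S ⊆ h)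
    _ ≤ k.choose r * (#F * (Fintype.card β).choose r) := by
        refine Nat.mul_le_mul_left _ ?_
        calc ∑ S ∈ light, codegree H S ≤ #light * #F :=
              sum_le_card_nsmul _ _ _ fun S hS => (mem_filter.1 hS).2.le
          _ ≤ (Fintype.card β).choose r * #F := Nat.mul_le_mul_right _ <|
              (card_filter_le _ _).trans (by rw [card_powersetCard, card_univ])
          _ = #F * (Fintype.card β).choose r := mul_comm _ _

lemma sum_card_pow_le_of_not_containsBerge (hF : ∀ e ∈ F, #e = r)
    (hB : ¬ ContainsBerge F H) (hH : ∀ h ∈ H, Fintype.card α ≤ #h) :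
    ∑ h ∈ H, #h ^ r ≤
      r ^ r * r.factorial * (Fintype.card α).choose r * #F * Fintype.card β ^ r := by
  calc ∑ h ∈ H, #h ^ r ≤ ∑ h ∈ H, r ^ r * r.factorial * (#h).choose r := by
        refine sum_le_sum fun h hh => ?_
        rw [mul_assoc, ← Nat.descFactorial_eq_factorial_mul_choose]
        exact pow_le_pow_mul_descFactorial
          ((le_card_of_not_containsBerge hF hB (hH h hh)).trans (hH h hh))
    _ = r ^ r * r.factorial * ∑ h ∈ H, (#h).choose r := by rw [mul_sum]
    _ ≤ r ^ r * r.factorial *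
          ((Fintype.card α).choose r * (#F * (Fintype.card β).choose r)) :=
        Nat.mul_le_mul_left _ (sum_choose_card_le_of_not_containsBerge hF hB hH)
    _ ≤ r ^ r * r.factorial * ((Fintype.card α).choose r * (#F * Fintype.card β ^ r)) := by
        gcongr
        exact Nat.choose_le_pow _ _
    _ = r ^ r * r.factorial * (Fintype.card α).choose r * #F * Fintype.card β ^ r := by ring

end Berge

theorem statement0_general {α : Type*} [Fintype α] [DecidableEq α] (r : ℕ)
    (F : Finset (Finset α)) (hF : ∀ e ∈ F, e.card = r) :
    ∃ C : ℝ, 0 < C ∧ ∀ n : ℕ, 0 < n → ∀ H : Finset (Finset (Fin n)),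
      ¬ ContainsBerge F H →
      (∀ h ∈ H, Fintype.card α ≤ h.card) →
      ∑ h ∈ H, (h.card : ℝ) ^ r ≤ C * (n : ℝ) ^ r := by
  set A : ℕ := r ^ r * r.factorial * (Fintype.card α).choose r * #F
  refine ⟨A + 1, by positivity, fun n _ H hB hH => ?_⟩
  have hbound := sum_card_pow_le_of_not_containsBerge hF hB hH
  rw [Fintype.card_fin] at hbound
  calc ∑ h ∈ H, (#h : ℝ) ^ r ≤ A * (n : ℝ) ^ r := by exact_mod_cast hbound
    _ ≤ (A + 1) * (n : ℝ) ^ r := by gcongr; linarith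

theorem statement0 {α : Type*} [Fintype α] [DecidableEq α] (r : ℕ) (hr : 2 ≤ r)
    (F : Finset (Finset α)) (hF : ∀ e ∈ F, e.card = r) :
    ∃ C : ℝ, 0 < C ∧ ∀ n : ℕ, 0 < n → ∀ H : Finset (Finset (Fin n)),
      ¬ ContainsBerge F H →
      (∀ h ∈ H, Fintype.card α ≤ h.card) →
      ∑ h ∈ H, (h.card : ℝ) ^ r ≤ C * (n : ℝ) ^ r :=
  statement0_general r F hF
end

section
/- For every k-graph F and all integers r ≥ k ≥ 2 and n ≥ 1, we have ex_k(n, K_r^(k), F) ≤ ex_r(n, Berge-F). -/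
open Finset

def cliqueFamily {β : Type*} [Fintype β] [DecidableEq β] (k r : ℕ) (G : Finset (Finset β)) :
    Finset (Finset β) :=
  (univ.powersetCard r).filter (fun S => ∀ e ∈ S.powersetCard k, e ∈ G)

section

variable {α β : Type*} [DecidableEq α] [Fintype β] [DecidableEq β]

theorem card_eq_of_mem_cliqueFamily {k r : ℕ} {G : Finset (Finset β)} {S : Finset β}
    (hS : S ∈ cliqueFamily k r G) : S.card = r :=
  (mem_powersetCard.1 (mem_filter.1 hS).1).2

theorem mem_of_subset_of_mem_cliqueFamily {k r : ℕ} {G : Finset (Finset β)} {S e : Finset β}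
    (hS : S ∈ cliqueFamily k r G) (he : e ⊆ S) (hek : e.card = k) : e ∈ G :=
  (mem_filter.1 hS).2 e (mem_powersetCard.2 ⟨he, hek⟩)

/-- Each edge of a Berge copy of a `k`-graph sits inside a clique, so the core edges
themselves are edges of `G`. -/
theorem copyIn_of_containsBerge_cliqueFamily {k r : ℕ} {F : Finset (Finset α)}
    {G : Finset (Finset β)} (hF : ∀ e ∈ F, e.card = k)
    (hB : ContainsBerge F (cliqueFamily k r G)) : CopyIn F G := by
  obtain ⟨φ, f, hφ, -, hfH, hsub⟩ := hB
  refine ⟨φ, hφ, fun e he => mem_of_subset_of_mem_cliqueFamily (hfH e he) (hsub e he) ?_⟩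
  rw [card_image_of_injective _ hφ, hF e he]

end

theorem cliqueCount_eq_card_cliqueFamily (k r : ℕ) {n : ℕ} (G : Finset (Finset (Fin n))) :
    cliqueCount k r G = (cliqueFamily k r G).card :=
  rfl

theorem le_exBerge {α : Type*} [DecidableEq α] {r n : ℕ} {F : Finset (Finset α)}
    {H : Finset (Finset (Fin n))} (hr : ∀ e ∈ H, e.card = r) (hH : ¬ ContainsBerge F H) :
    H.card ≤ exBerge r n F := by
  refine le_csSup ⟨Fintype.card (Finset (Fin n)), ?_⟩ ⟨H, hr, hH, rfl⟩
  rintro _ ⟨H', -, -, rfl⟩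
  exact card_le_univ H'

theorem statement8_general {α : Type*} [DecidableEq α] (k r n : ℕ)
    (F : Finset (Finset α)) (hF : ∀ e ∈ F, e.card = k) :
    exGenClique k r n F ≤ exBerge r n F := by
  refine csSup_le' ?_
  rintro _ ⟨G, -, hGfree, rfl⟩
  rw [cliqueCount_eq_card_cliqueFamily]
  exact le_exBerge (fun _ => card_eq_of_mem_cliqueFamily)
    (fun hB => hGfree (copyIn_of_containsBerge_cliqueFamily hF hB))

theorem statement8 {α : Type*} [DecidableEq α] (k r n : ℕ) (hk : 2 ≤ k) (hkr : k ≤ r)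
    (hn : 1 ≤ n) (F : Finset (Finset α)) (hF : ∀ e ∈ F, e.card = k) :
    exGenClique k r n F ≤ exBerge r n F :=
  statement8_general k r n F hF
end

section
/- For every k-graph F and all integers r ≥ k ≥ 2 and n ≥ 1, we have ex_r(n, Berge-F) ≤ ex_k(n, K_r^(k), F) + ex_k(n, F), where ex_k(n, F) denotes the maximum number of hyperedges in an F-free k-graph on n vertices. -/
open Finset

/-! Greedily pick, for the hyperedges `h` of a Berge-`F`-free `r`-graph `H`, distinct `k`-subsets
`sel h ⊆ h`, skipping `h` when all its `k`-subsets are already picked. The picked `k`-sets form an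
`F`-free `k`-graph `G`, since a copy of `F` in `G` becomes a Berge copy of `F` in `H` once each
picked `k`-set is sent back to the hyperedge it was picked from. The hyperedges picked from number `|G|`, and every skipped one spans an `r`-clique
of `G`, so `|H| ≤ N(K_r^(k), G) + |G|`. -/

section Greedy

variable {β : Type*} [DecidableEq β]

theorem exists_injOn_powersetCard_cover (k : ℕ) (H : Finset (Finset β)) :
    ∃ (B : Finset (Finset β)) (sel : Finset β → Finset β), B ⊆ H ∧ Set.InjOn sel B ∧
      (∀ h ∈ B, sel h ∈ h.powersetCard k) ∧ ∀ h ∈ H \ B, h.powersetCard k ⊆ B.image sel := by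
  induction H using Finset.induction_on with
  | empty => exact ⟨∅, id, subset_rfl, by simp, by simp, by simp⟩
  | @insert a H haH ih =>
    obtain ⟨B, sel, hBH, hinj, hsel, hcover⟩ := ih
    have haB : a ∉ B := fun ha => haH (hBH ha)
    by_cases ha : a.powersetCard k ⊆ B.image sel
    · refine ⟨B, sel, hBH.trans (subset_insert a H), hinj, hsel, fun h hh => ?_⟩
      obtain ⟨hh, hhB⟩ := mem_sdiff.mp hh
      rcases mem_insert.mp hh with rfl | hh
      · exact ha
      · exact hcover h (mem_sdiff.mpr ⟨hh, hhB⟩)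
    obtain ⟨s, hs, hsB⟩ := not_subset.mp ha
    have hupdate : Set.EqOn (Function.update sel a s) sel B := fun h hh =>
      Function.update_of_ne (ne_of_mem_of_not_mem hh haB) _ _
    have himage : B.image (Function.update sel a s) = B.image sel := image_congr hupdate
    refine ⟨insert a B, Function.update sel a s, insert_subset_insert a hBH, ?_, ?_, ?_⟩
    · rw [coe_insert, Set.injOn_insert haB, hupdate.image_eq, Function.update_self]
      exact ⟨hinj.congr hupdate.symm, by simpa using hsB⟩
    · intro h hh
      rcases mem_insert.mp hh with rfl | hh
      · rwa [Function.update_self]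
      · rw [hupdate hh]
        exact hsel h hh
    · intro h hh
      rw [insert_sdiff_insert, mem_sdiff] at hh
      rw [image_insert, himage]
      exact (hcover h (mem_sdiff.mpr ⟨hh.1, fun hB => hh.2 (mem_insert_of_mem hB)⟩)).trans
        (subset_insert _ _)

theorem ContainsBerge.of_copyIn_image {α : Type*} [DecidableEq α] {F : Finset (Finset α)}
    {H B : Finset (Finset β)} {sel : Finset β → Finset β} (hBH : B ⊆ H)
    (hsel : ∀ h ∈ B, sel h ⊆ h) (hcopy : CopyIn F (B.image sel)) : ContainsBerge F H := by
  obtain ⟨φ, hφ, hF⟩ := hcopy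
  choose! f hfB hsel_f using fun e he => mem_image.mp (hF e he)
  refine ⟨φ, f, hφ, fun e₁ he₁ e₂ he₂ heq => ?_, fun e he => hBH (hfB e he), fun e he => ?_⟩
  · refine image_injective hφ ?_
    rw [← hsel_f e₁ he₁, ← hsel_f e₂ he₂, heq]
  · exact hsel_f e he ▸ hsel (f e) (hfB e he)

end Greedy

theorem card_le_cliqueCount {k r n : ℕ} {H G : Finset (Finset (Fin n))}
    (hH : ∀ h ∈ H, h.card = r) (hG : ∀ h ∈ H, h.powersetCard k ⊆ G) :
    H.card ≤ cliqueCount k r G :=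
  card_le_card fun h hh => mem_filter.mpr
    ⟨mem_powersetCard.mpr ⟨subset_univ h, hH h hh⟩, fun _ he => hG h hh he⟩

theorem exists_copyIn_free_card_le_cliqueCount_add_card {α : Type*} [DecidableEq α] (k : ℕ)
    {r n : ℕ} (F : Finset (Finset α)) {H : Finset (Finset (Fin n))} (hH : ∀ h ∈ H, h.card = r)
    (hberge : ¬ ContainsBerge F H) :
    ∃ G : Finset (Finset (Fin n)), (∀ e ∈ G, e.card = k) ∧ ¬ CopyIn F G ∧
      H.card ≤ cliqueCount k r G + G.card := by
  obtain ⟨B, sel, hBH, hinj, hsel, hcover⟩ := exists_injOn_powersetCard_cover k H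
  simp only [mem_powersetCard] at hsel
  refine ⟨B.image sel, ?_, ?_, ?_⟩
  · simp only [mem_image, forall_exists_index, and_imp]
    rintro _ h hh rfl
    exact (hsel h hh).2
  · exact fun hcopy => hberge (.of_copyIn_image hBH (fun h hh => (hsel h hh).1) hcopy)
  · calc H.card = (H \ B).card + B.card := (card_sdiff_add_card_eq_card hBH).symm
      _ ≤ cliqueCount k r (B.image sel) + (B.image sel).card := by
        rw [card_image_of_injOn hinj]
        exact Nat.add_le_add_right
          (card_le_cliqueCount (fun h hh => hH h (mem_sdiff.mp hh).1) hcover) _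

theorem cliqueCount_le_exGenClique {α : Type*} [DecidableEq α] {k r n : ℕ}
    {F : Finset (Finset α)} {G : Finset (Finset (Fin n))} (hG : ∀ e ∈ G, e.card = k)
    (hF : ¬ CopyIn F G) : cliqueCount k r G ≤ exGenClique k r n F :=
  le_csSup ⟨(univ.powersetCard r).card, by
    rintro _ ⟨G', -, -, rfl⟩
    exact card_filter_le _ _⟩ ⟨G, hG, hF, rfl⟩

theorem card_le_exForb {α : Type*} [DecidableEq α] {k n : ℕ} {F : Finset (Finset α)}
    {G : Finset (Finset (Fin n))} (hG : ∀ e ∈ G, e.card = k) (hF : ¬ CopyIn F G) :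
    G.card ≤ exForb k n F :=
  le_csSup ⟨Fintype.card (Finset (Fin n)), by
    rintro _ ⟨G', -, -, rfl⟩
    exact card_le_univ _⟩ ⟨G, hG, hF, rfl⟩

theorem statement9_general {α : Type*} [DecidableEq α] (k r n : ℕ) (F : Finset (Finset α)) :
    exBerge r n F ≤ exGenClique k r n F + exForb k n F := by
  refine csSup_le' ?_
  rintro _ ⟨H, hH, hberge, rfl⟩
  obtain ⟨G, hGk, hGF, hcard⟩ := exists_copyIn_free_card_le_cliqueCount_add_card k F hH hberge
  exact hcard.trans (add_le_add (cliqueCount_le_exGenClique hGk hGF) (card_le_exForb hGk hGF))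

theorem statement9 {α : Type*} [DecidableEq α] (k r n : ℕ) (hk : 2 ≤ k) (hkr : k ≤ r)
    (hn : 1 ≤ n) (F : Finset (Finset α)) (hF : ∀ e ∈ F, e.card = k) :
    exBerge r n F ≤ exGenClique k r n F + exForb k n F :=
  statement9_general k r n F
end

section
/- Let F be an r-graph with at least two hyperedges and let H be a Berge-F-free hypergraph. Then every copy of F in the r-shadow Γ^(r)(H) contains two distinct r-edges that are both contained in a common hyperedge of H. -/
open Finset

/-! If no hyperedge of `H` contains two edges of the copy of `F`, then choosing for every edge of
the copy a hyperedge of `H` containing it is injective on `F`, i.e. a Berge copy of `F`. -/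

theorem exists_superset_of_mem_rShadow {β : Type*} [DecidableEq β] {r : ℕ}
    {H : Finset (Finset β)} {s : Finset β} (hs : s ∈ rShadow r H) : ∃ h ∈ H, s ⊆ h := by
  simp only [rShadow, mem_biUnion, mem_powersetCard] at hs
  obtain ⟨h, hH, hsub, -⟩ := hs
  exact ⟨h, hH, hsub⟩

theorem containsBerge_of_forall_exists_superset {α β : Type*} [DecidableEq α] [DecidableEq β]
    {F : Finset (Finset α)} {H : Finset (Finset β)} {φ : α → β} (hφ : Function.Injective φ)
    (hcover : ∀ e ∈ F, ∃ h ∈ H, e.image φ ⊆ h)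
    (hsep : ∀ e₁ ∈ F, ∀ e₂ ∈ F, ∀ h ∈ H, e₁.image φ ⊆ h → e₂.image φ ⊆ h → e₁ = e₂) :
    ContainsBerge F H := by
  choose! f hfH hsub using hcover
  refine ⟨φ, f, hφ, ?_, hfH, hsub⟩
  intro e₁ he₁ e₂ he₂ hf
  exact hsep e₁ he₁ e₂ he₂ (f e₁) (hfH e₁ he₁) (hsub e₁ he₁) (hf ▸ hsub e₂ he₂)

theorem statement16_general {α β : Type*} [DecidableEq α] [DecidableEq β] (r : ℕ)
    (F : Finset (Finset α))
    (H : Finset (Finset β)) (hfree : ¬ ContainsBerge F H)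
    (φ : α → β) (hφ : Function.Injective φ)
    (hcopy : ∀ e ∈ F, e.image φ ∈ rShadow r H) :
    ∃ e₁ ∈ F, ∃ e₂ ∈ F, e₁.image φ ≠ e₂.image φ ∧
      ∃ h ∈ H, e₁.image φ ⊆ h ∧ e₂.image φ ⊆ h := by
  by_contra! hsep
  refine hfree (containsBerge_of_forall_exists_superset hφ
    (fun e he => exists_superset_of_mem_rShadow (hcopy e he)) ?_)
  intro e₁ he₁ e₂ he₂ h hH h₁ h₂
  by_contra hne
  exact hsep e₁ he₁ e₂ he₂ (fun himg => hne (image_injective hφ himg)) h hH h₁ h₂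

theorem statement16 {α β : Type*} [DecidableEq α] [DecidableEq β] (r : ℕ)
    (F : Finset (Finset α)) (hF : ∀ e ∈ F, e.card = r) (hF2 : 2 ≤ F.card)
    (H : Finset (Finset β)) (hfree : ¬ ContainsBerge F H)
    (φ : α → β) (hφ : Function.Injective φ)
    (hcopy : ∀ e ∈ F, e.image φ ∈ rShadow r H) :
    ∃ e₁ ∈ F, ∃ e₂ ∈ F, e₁.image φ ≠ e₂.image φ ∧
      ∃ h ∈ H, e₁.image φ ⊆ h ∧ e₂.image φ ⊆ h :=
  statement16_general r F H hfree φ hφ hcopy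
end

section
/- Let r ≥ k ≥ 2, let F be a k-graph, and let G be an F-free k-graph on a vertex set V. Let H be the r-graph on V whose hyperedges are exactly those r-element subsets S of V such that every k-element subset of S is a hyperedge of G (i.e., S spans a copy of K_r^(k) in G). Then H is Berge-F-free. -/
open Finset

theorem CopyIn.mono {α β : Type*} [DecidableEq α] [DecidableEq β] {F : Finset (Finset α)}
    {G G' : Finset (Finset β)} (hGG' : G ⊆ G') (hF : CopyIn F G) : CopyIn F G' :=
  let ⟨φ, hφ, hmem⟩ := hF
  ⟨φ, hφ, fun e he => hGG' (hmem e he)⟩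

theorem ContainsBerge.copyIn_rShadow {α β : Type*} [DecidableEq α] [DecidableEq β] {k : ℕ}
    {F : Finset (Finset α)} {H : Finset (Finset β)} (hF : ∀ e ∈ F, e.card = k)
    (hFH : ContainsBerge F H) : CopyIn F (rShadow k H) := by
  obtain ⟨φ, f, hφ, -, hfH, hsub⟩ := hFH
  refine ⟨φ, hφ, fun e he => mem_biUnion.2 ⟨f e, hfH e he, mem_powersetCard.2 ⟨hsub e he, ?_⟩⟩⟩
  rw [card_image_of_injective _ hφ, hF e he]

/-- The decidability instance is a binder so that the lemma also applies to filters decided through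
`Fintype (Finset β)` rather than `Finset.decidableDforallFinset`. -/
theorem rShadow_filter_subset {β : Type*} [DecidableEq β] (k : ℕ) (s G : Finset (Finset β))
    [DecidablePred fun S : Finset β => ∀ e ∈ S.powersetCard k, e ∈ G] :
    rShadow k (s.filter (fun S => ∀ e ∈ S.powersetCard k, e ∈ G)) ⊆ G := by
  intro e he
  obtain ⟨S, hS, heS⟩ := mem_biUnion.1 he
  exact (mem_filter.1 hS).2 e heS

theorem statement18_general {α β : Type*} [DecidableEq α] [DecidableEq β] [Fintype β]
    (k r : ℕ)
    (F : Finset (Finset α)) (hF : ∀ e ∈ F, e.card = k)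
    (G : Finset (Finset β)) (hGfree : ¬ CopyIn F G) :
    ¬ ContainsBerge F
      (((Finset.univ : Finset β).powersetCard r).filter
        (fun S => ∀ e ∈ S.powersetCard k, e ∈ G)) := fun hBerge =>
  hGfree ((hBerge.copyIn_rShadow hF).mono (rShadow_filter_subset k _ G))

theorem statement18 {α β : Type*} [DecidableEq α] [DecidableEq β] [Fintype β]
    (k r : ℕ) (hk : 2 ≤ k) (hkr : k ≤ r)
    (F : Finset (Finset α)) (hF : ∀ e ∈ F, e.card = k)
    (G : Finset (Finset β)) (hG : ∀ e ∈ G, e.card = k) (hGfree : ¬ CopyIn F G) :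
    ¬ ContainsBerge F
      (((Finset.univ : Finset β).powersetCard r).filter
        (fun S => ∀ e ∈ S.powersetCard k, e ∈ G)) :=
  statement18_general k r F hF G hGfree
end
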